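/- arXiv:1004.1309 — 3 statements merged into one kernel-verified Lean document; each statement's English description precedes it below -/
import Mathlib

section
/- For every α ∈ (0, π) and θ ∈ [0,1], the kernel k_{α,θ}(u,t) := √u · (u/t)^θ · ((t/u)^{π/(2α)} / ((t/u)^{π/α} + 1)) · (1/u) satisfies sup_{u>0} ∫_0^∞ √t · |∂k_{α,θ}/∂t (u,t)| dt < ∞. -/
/-!
For `t > 0` the kernel is a rescaled profile: `k_{α,θ}(u,t) = u^{-1/2} g(t/u)` with
`g(s) = s^a / (s^b + 1)`, `a = π/(2α) - θ`, `b = π/α`. Hence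
`√t |∂ₜ k_{α,θ}(u,t)| = u⁻¹ √(t/u) |g'(t/u)|`, and the substitution `s = t/u` shows that the
integral does not depend on `u` at all. It is finite because
`|g'(s)| ≤ (|a| + |b|) s^(a-1) / (s^b + 1)` and `s^(a-1/2) / (s^b + 1)` is integrable on `(0, ∞)`
as soon as `a > -1/2` (at `0`) and `a - b < -1/2` (at `∞`); this is where `α ∈ (0, π)` and
`θ ∈ [0, 1]` enter.
-/

open MeasureTheory Real Set

/-- The kernel `k_α(u,t) = (t/u)^(π/(2α)) / ((t/u)^(π/α) + 1) · (1/u)`. -/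
noncomputable def kAlpha (α u t : ℝ) : ℝ :=
  (t / u) ^ (π / (2 * α)) / ((t / u) ^ (π / α) + 1) * (1 / u)

/-- The kernel `k_{α,θ}(u,t) = √u · (u/t)^θ · k_α(u,t)`. -/
noncomputable def kAlphaTheta (α θ u t : ℝ) : ℝ :=
  Real.sqrt u * (u / t) ^ θ * kAlpha α u t

noncomputable def rpowDivRpowAddOne (a b x : ℝ) : ℝ :=
  x ^ a / (x ^ b + 1)

theorem hasDerivAt_rpowDivRpowAddOne (a b : ℝ) {s : ℝ} (hs : 0 < s) :
    HasDerivAt (rpowDivRpowAddOne a b)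
      ((a * s ^ (a - 1) * (s ^ b + 1) - s ^ a * (b * s ^ (b - 1))) / (s ^ b + 1) ^ 2) s :=
  (hasDerivAt_rpow_const (Or.inl hs.ne')).div
    ((hasDerivAt_rpow_const (Or.inl hs.ne')).add_const 1) (by positivity)

theorem abs_deriv_rpowDivRpowAddOne_le (a b : ℝ) {s : ℝ} (hs : 0 < s) :
    |deriv (rpowDivRpowAddOne a b) s| ≤ (|a| + |b|) * (s ^ (a - 1) / (s ^ b + 1)) := by
  have hP : 0 < s ^ (a - 1) := rpow_pos_of_pos hs _
  have hQ : 0 < s ^ b := rpow_pos_of_pos hs _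
  have hD : 0 < s ^ b + 1 := by linarith
  have hsa : s ^ a * s ^ (b - 1) = s ^ (a - 1) * s ^ b := by
    rw [← rpow_add hs, ← rpow_add hs]; ring_nf
  have hnum : |a * s ^ (a - 1) * (s ^ b + 1) - s ^ a * (b * s ^ (b - 1))|
      ≤ (|a| + |b|) * s ^ (a - 1) * (s ^ b + 1) := by
    have h₁ : |a * s ^ (a - 1) * (s ^ b + 1)| = |a| * s ^ (a - 1) * (s ^ b + 1) := by
      rw [abs_mul, abs_mul, abs_of_pos hP, abs_of_pos hD]
    have h₂ : |s ^ a * (b * s ^ (b - 1))| = |b| * s ^ (a - 1) * s ^ b := by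
      rw [mul_left_comm, hsa, abs_mul, abs_of_pos (mul_pos hP hQ), mul_assoc]
    have : 0 ≤ |b| * s ^ (a - 1) := by positivity
    calc _ ≤ |a| * s ^ (a - 1) * (s ^ b + 1) + |b| * s ^ (a - 1) * s ^ b := by
          rw [← h₁, ← h₂]; exact abs_sub _ _
      _ ≤ (|a| + |b|) * s ^ (a - 1) * (s ^ b + 1) := by nlinarith
  rw [(hasDerivAt_rpowDivRpowAddOne a b hs).deriv, abs_div, abs_of_pos (pow_pos hD 2),
    div_le_iff₀ (pow_pos hD 2)]
  calc _ ≤ (|a| + |b|) * s ^ (a - 1) * (s ^ b + 1) := hnum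
    _ = _ := by field_simp

theorem integrableOn_rpowDivRpowAddOne_Ioi {b c : ℝ} (hc : -1 < c) (hcb : c - b < -1) :
    IntegrableOn (rpowDivRpowAddOne c b) (Ioi 0) := by
  have hcont : ContinuousOn (rpowDivRpowAddOne c b) (Ioi 0) := fun s hs =>
    (hasDerivAt_rpowDivRpowAddOne c b hs).continuousAt.continuousWithinAt
  rw [← Ioc_union_Ioi_eq_Ioi zero_le_one]
  refine IntegrableOn.union ?_ ?_
  · refine (intervalIntegral.intervalIntegrable_rpow' hc).1.mono'
      ((hcont.mono Ioc_subset_Ioi_self).aestronglyMeasurable measurableSet_Ioc) ?_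
    filter_upwards [ae_restrict_mem measurableSet_Ioc] with s hs
    have hs0 : 0 < s := hs.1
    rw [rpowDivRpowAddOne, norm_of_nonneg (by positivity)]
    exact div_le_self (by positivity) (by simp [rpow_nonneg hs0.le])
  · refine (integrableOn_Ioi_rpow_of_lt hcb one_pos).mono'
      ((hcont.mono (Ioi_subset_Ioi zero_le_one)).aestronglyMeasurable measurableSet_Ioi) ?_
    filter_upwards [ae_restrict_mem measurableSet_Ioi] with s hs
    have hs0 : 0 < s := one_pos.trans hs
    rw [rpowDivRpowAddOne, norm_of_nonneg (by positivity), rpow_sub hs0]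
    gcongr
    linarith

theorem setLIntegral_Ioi_ofReal_sqrt_mul_abs_deriv_rpowDivRpowAddOne_lt_top {a b : ℝ}
    (ha : -1 / 2 < a) (hab : a - b < -1 / 2) :
    ∫⁻ s in Ioi 0, ENNReal.ofReal (√s * |deriv (rpowDivRpowAddOne a b) s|) < ⊤ := by
  have hdom := (integrableOn_rpowDivRpowAddOne_Ioi (c := a - 1 / 2) (b := b) (by linarith)
    (by linarith)).const_mul (|a| + |b|)
  refine lt_of_le_of_lt (setLIntegral_mono' measurableSet_Ioi fun s hs => ?_) hdom.lintegral_lt_top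
  refine ENNReal.ofReal_le_ofReal ?_
  have hs0 : 0 < s := hs
  have hsqrt : √s * s ^ (a - 1) = s ^ (a - 1 / 2) := by
    rw [sqrt_eq_rpow, ← rpow_add hs0]; ring_nf
  calc √s * |deriv (rpowDivRpowAddOne a b) s|
      ≤ √s * ((|a| + |b|) * (s ^ (a - 1) / (s ^ b + 1))) := by
        gcongr; exact abs_deriv_rpowDivRpowAddOne_le a b hs0
    _ = (|a| + |b|) * rpowDivRpowAddOne (a - 1 / 2) b s := by
        rw [rpowDivRpowAddOne, ← hsqrt]; ring

theorem setLIntegral_Ioi_comp_div (f : ℝ → ENNReal) {c : ℝ} (hc : 0 < c) :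
    ∫⁻ t in Ioi 0, f (t / c) = ENNReal.ofReal c * ∫⁻ s in Ioi 0, f s := by
  have hmp : MeasurePreserving (· * c⁻¹) volume (ENNReal.ofReal c • volume) := by
    refine ⟨measurable_mul_const _, ?_⟩
    rw [Real.map_volume_mul_right (inv_ne_zero hc.ne'), inv_inv, abs_of_pos hc]
  have hpre : (· * c⁻¹) ⁻¹' Ioi (0 : ℝ) = Ioi 0 := by
    ext t; simp [mul_pos_iff_of_pos_right (inv_pos.2 hc)]
  have := hmp.setLIntegral_comp_preimage_emb
    (Homeomorph.mulRight₀ c⁻¹ (inv_ne_zero hc.ne')).isClosedEmbedding.measurableEmbedding f (Ioi 0)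
  rw [hpre] at this
  simp_rw [div_eq_mul_inv]
  rw [this, Measure.restrict_smul, lintegral_smul_measure, smul_eq_mul]

theorem kAlphaTheta_eq_inv_sqrt_mul_rpowDivRpowAddOne {α θ u t : ℝ} (hu : 0 < u) (ht : 0 < t) :
    kAlphaTheta α θ u t = (√u)⁻¹ * rpowDivRpowAddOne (π / (2 * α) - θ) (π / α) (t / u) := by
  have hs : 0 < t / u := div_pos ht hu
  have hθ : (u / t) ^ θ * (t / u) ^ (π / (2 * α)) = (t / u) ^ (π / (2 * α) - θ) := by
    rw [← inv_div, inv_rpow hs.le, rpow_sub hs]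
    ring
  have hu' : √u * (1 / u) = (√u)⁻¹ := by
    rw [← div_eq_mul_one_div, sqrt_div_self', one_div]
  rw [kAlphaTheta, kAlpha, rpowDivRpowAddOne, ← hθ, ← hu']
  ring

theorem hasDerivAt_kAlphaTheta {α θ u t : ℝ} (hu : 0 < u) (ht : 0 < t) :
    HasDerivAt (kAlphaTheta α θ u)
      ((√u)⁻¹ * (deriv (rpowDivRpowAddOne (π / (2 * α) - θ) (π / α)) (t / u) / u)) t := by
  have hg := hasDerivAt_rpowDivRpowAddOne (π / (2 * α) - θ) (π / α) (div_pos ht hu)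
  have := (hg.differentiableAt.hasDerivAt.comp t ((hasDerivAt_id t).div_const u)).const_mul (√u)⁻¹
  refine (this.congr_of_eventuallyEq ?_).congr_deriv (by simp [div_eq_mul_inv])
  filter_upwards [Ioi_mem_nhds ht] with x hx
  exact kAlphaTheta_eq_inv_sqrt_mul_rpowDivRpowAddOne hu hx

theorem setLIntegral_Ioi_ofReal_sqrt_mul_abs_deriv_kAlphaTheta (α θ : ℝ) {u : ℝ} (hu : 0 < u) :
    ∫⁻ t in Ioi 0, ENNReal.ofReal (√t * |deriv (kAlphaTheta α θ u) t|) =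
      ∫⁻ s in Ioi 0, ENNReal.ofReal
        (√s * |deriv (rpowDivRpowAddOne (π / (2 * α) - θ) (π / α)) s|) := by
  set h : ℝ → ℝ := fun s => √s * |deriv (rpowDivRpowAddOne (π / (2 * α) - θ) (π / α)) s|
  have hpt : ∀ t ∈ Ioi (0 : ℝ), ENNReal.ofReal (√t * |deriv (kAlphaTheta α θ u) t|) =
      ENNReal.ofReal u⁻¹ * ENNReal.ofReal (h (t / u)) := by
    intro t ht
    simp only [h]
    rw [(hasDerivAt_kAlphaTheta hu ht).deriv, ← ENNReal.ofReal_mul (by positivity),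
      sqrt_div' _ hu.le, abs_mul, abs_div, abs_of_pos (inv_pos.2 (sqrt_pos.2 hu)), abs_of_pos hu]
    congr 1
    field_simp
  rw [setLIntegral_congr_fun measurableSet_Ioi hpt, lintegral_const_mul' _ _ ENNReal.ofReal_ne_top,
    setLIntegral_Ioi_comp_div (fun s => ENNReal.ofReal (h s)) hu, ← mul_assoc,
    ← ENNReal.ofReal_mul (by positivity), inv_mul_cancel₀ hu.ne', ENNReal.ofReal_one, one_mul]

/-- for every `α ∈ (0,π)` and `θ ∈ [0,1]`,
`sup_{u>0} ∫_0^∞ √t · |∂k_{α,θ}/∂t (u,t)| dt < ∞`. -/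
theorem kernel_derivative_uniform_integral_bound
    (α θ : ℝ) (hα : α ∈ Set.Ioo 0 π) (hθ : θ ∈ Set.Icc (0:ℝ) 1) :
    ∃ C : ℝ, ∀ u : ℝ, 0 < u →
      ∫⁻ t in Set.Ioi (0:ℝ),
          ENNReal.ofReal (Real.sqrt t * |deriv (fun t => kAlphaTheta α θ u t) t|)
        ≤ ENNReal.ofReal C := by
  obtain ⟨hα0, hαπ⟩ := hα
  have hp : 1 / 2 < π / (2 * α) := by
    rw [lt_div_iff₀ (by positivity)]; linarith
  have hb : π / α = 2 * (π / (2 * α)) := by field_simp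
  have hfin := setLIntegral_Ioi_ofReal_sqrt_mul_abs_deriv_rpowDivRpowAddOne_lt_top
    (a := π / (2 * α) - θ) (b := π / α) (by linarith [hθ.2]) (by linarith [hθ.1])
  exact ⟨_, fun u hu => (setLIntegral_Ioi_ofReal_sqrt_mul_abs_deriv_kAlphaTheta α θ hu).trans_le
    (ENNReal.ofReal_toReal hfin.ne).ge⟩
end

section
/- If g : Σ_{π/2 + ε} → E is analytic and bounded on the sector Σ_{π/2+ε} = {z ∈ ℂ \ {0}: |arg z| < π/2 + ε} for some ε > 0, where E is a complex Banach space, then for all t > 0, g(t) = (1/π) ∫_{-∞}^∞ (t/(t² + v²)) g(iv) dv. -/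
open MeasureTheory Real Set Complex

/-- The open sector `Σ_σ = {z ∈ ℂ \ {0} : |arg z| < σ}`. -/
def sector (σ : ℝ) : Set ℂ := {z : ℂ | z ≠ 0 ∧ |Complex.arg z| < σ}

/-! The Cayley transform `ζ ↦ t (1 - ζ) / (1 + ζ)` maps the closed unit disc minus `±1` into the
closed right half-plane minus `0`, sends `0` to `t` and the unit circle onto the imaginary axis.
By the mean value property, `g t` is the average of `g ∘ cayley t` over every circle of radius
`r < 1`. As `g` is bounded, and continuous up to the imaginary axis because it is holomorphic on
the larger sector, dominated convergence lets `r → 1`; the substitution `θ = -2 arctan (v / t)`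
turns the average over the unit circle into the Poisson integral. -/

open Filter Topology Metric

theorem DifferentiableOn.circleAverage_eq_of_bounded {E : Type*} [NormedAddCommGroup E]
    [NormedSpace ℂ E] [CompleteSpace E] {f : ℂ → E} {c : ℂ} {R M : ℝ} (hR : 0 < R)
    (hf : DifferentiableOn ℂ f (ball c R)) (hM : ∀ z ∈ ball c R, ‖f z‖ ≤ M)
    (hcont : ∀ᵐ θ, ContinuousAt f (circleMap c R θ)) :
    circleAverage f c R = f c := by
  have hsub : ∀ r ∈ Ioo 0 R, ∀ θ, circleMap c r θ ∈ ball c R := fun r hr θ =>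
    closedBall_subset_ball hr.2 (circleMap_mem_closedBall c hr.1.le θ)
  have hinner : ∀ᶠ r in 𝓝[<] R, circleAverage f c r = f c := by
    filter_upwards [Ioo_mem_nhdsLT hR] with r hr
    refine (hf.diffContOnCl_ball ?_).circleAverage
    rw [abs_of_pos hr.1]
    exact closedBall_subset_ball hr.2
  have hlim : Tendsto (circleAverage f c) (𝓝[<] R) (𝓝 (circleAverage f c R)) := by
    refine Tendsto.const_smul ?_ _
    refine intervalIntegral.tendsto_integral_filter_of_dominated_convergence (fun _ => M) ?_ ?_
      intervalIntegrable_const ?_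
    · filter_upwards [Ioo_mem_nhdsLT hR] with r hr
      exact (hf.continuousOn.comp_continuous (continuous_circleMap c r)
        (hsub r hr)).aestronglyMeasurable
    · filter_upwards [Ioo_mem_nhdsLT hR] with r hr
      exact Eventually.of_forall fun θ _ => hM _ (hsub r hr θ)
    · filter_upwards [hcont] with θ hθ _
      refine hθ.tendsto.comp (Tendsto.mono_left ?_ nhdsWithin_le_nhds)
      exact (show Continuous fun r : ℝ => circleMap c r θ by fun_prop [circleMap]).tendsto R
  exact tendsto_nhds_unique hlim (tendsto_const_nhds.congr' (hinner.mono fun _ h => h.symm))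

theorem circleAverage_eq_integral_neg_pi_pi {E : Type*} [NormedAddCommGroup E] [NormedSpace ℝ E]
    (f : ℂ → E) (c : ℂ) (R : ℝ) :
    circleAverage f c R = (2 * π)⁻¹ • ∫ θ in -π..π, f (circleMap c R θ) := by
  have hper : Function.Periodic (fun θ => f (circleMap c R θ)) (2 * π) := fun θ => by
    simp only [periodic_circleMap c R θ]
  rw [circleAverage_def, ← zero_add (2 * π), ← hper.intervalIntegral_add_eq (-π) 0]
  ring_nf

theorem ae_sin_ne_zero : ∀ᵐ θ : ℝ, Real.sin θ ≠ 0 := by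
  have : {θ : ℝ | Real.sin θ = 0} = range fun n : ℤ => n * π := by
    ext θ
    simp [Real.sin_eq_zero_iff]
  refine ae_iff.2 ?_
  simp only [not_not, this]
  exact (countable_range _).measure_zero volume

theorem integral_neg_pi_pi_eq_integral_comp_arctan {E : Type*} [NormedAddCommGroup E]
    [NormedSpace ℝ E] (F : ℝ → E) {t : ℝ} (ht : 0 < t) :
    ∫ θ in -π..π, F θ = ∫ v, (2 * (t / (t ^ 2 + v ^ 2))) • F (-2 * Real.arctan (v / t)) := by
  have hderiv : ∀ v ∈ univ, HasDerivWithinAt (fun v => -2 * Real.arctan (v / t))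
      (-(2 * (t / (t ^ 2 + v ^ 2)))) univ v := by
    intro v _
    refine ((((Real.hasDerivAt_arctan (v / t)).comp v
      ((hasDerivAt_id v).div_const t)).const_mul (-2)).congr_deriv ?_).hasDerivWithinAt
    field_simp
  have hinj : InjOn (fun v => -2 * Real.arctan (v / t)) univ := fun a _ b _ hab => by
    have : Real.arctan (a / t) = Real.arctan (b / t) := by linarith
    simpa [ht.ne'] using Real.arctan_injective this
  have himage : (fun v => -2 * Real.arctan (v / t)) '' univ = Ioo (-π) π := by
    ext θ
    simp only [image_univ, mem_range, mem_Ioo]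
    constructor
    · rintro ⟨v, rfl⟩
      constructor <;> linarith [arctan_lt_pi_div_two (v / t), neg_pi_div_two_lt_arctan (v / t)]
    · rintro ⟨h₁, h₂⟩
      refine ⟨t * Real.tan (-(θ / 2)), ?_⟩
      rw [mul_div_cancel_left₀ _ ht.ne', Real.arctan_tan (by linarith) (by linarith)]
      ring
  rw [intervalIntegral.integral_of_le (by linarith [pi_pos]), integral_Ioc_eq_integral_Ioo,
    ← himage, integral_image_eq_integral_abs_deriv_smul MeasurableSet.univ hderiv hinj,
    Measure.restrict_univ]
  congr 1 with v
  rw [abs_neg, abs_of_nonneg (by positivity)]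

theorem isOpen_sector (σ : ℝ) : IsOpen (sector σ) := by
  rcases le_or_gt σ π with hσ | hσ
  · have : sector σ = slitPlane ∩ arg ⁻¹' Ioo (-σ) σ := by
      ext z
      simp only [sector, mem_ofPred_eq, mem_inter_iff, mem_preimage, mem_Ioo, ← abs_lt,
        mem_slitPlane_iff_arg]
      constructor
      · rintro ⟨hz, hσz⟩
        exact ⟨⟨fun h => by rw [h, abs_of_pos pi_pos] at hσz; linarith, hz⟩, hσz⟩
      · rintro ⟨⟨-, hz⟩, hσz⟩
        exact ⟨hz, hσz⟩
    rw [this]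
    exact continuousOn_arg.isOpen_inter_preimage isOpen_slitPlane isOpen_Ioo
  · have : sector σ = {0}ᶜ := by
      ext z
      simpa [sector] using fun _ => (abs_arg_le_pi z).trans_lt hσ
    rw [this]
    exact isOpen_compl_singleton

theorem mem_sector_of_re_nonneg {σ : ℝ} (hσ : π / 2 < σ) {z : ℂ} (hz : z ≠ 0) (hre : 0 ≤ z.re) :
    z ∈ sector σ :=
  ⟨hz, (abs_arg_le_pi_div_two_iff.2 hre).trans_lt hσ⟩

noncomputable def cayley (t : ℝ) (ζ : ℂ) : ℂ := t * (1 - ζ) / (1 + ζ)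

@[simp]
theorem cayley_zero (t : ℝ) : cayley t 0 = t := by simp [cayley]

theorem re_cayley (t : ℝ) (ζ : ℂ) : (cayley t ζ).re = t * (1 - normSq ζ) / normSq (1 + ζ) := by
  rw [cayley, div_re, ← add_div]
  congr 1
  simp only [mul_re, mul_im, sub_re, sub_im, one_re, one_im, ofReal_re, ofReal_im, add_re,
    add_im, normSq_apply]
  ring

theorem cayley_mem_sector {t σ : ℝ} (ht : 0 < t) (hσ : π / 2 < σ) {ζ : ℂ} (hζ : ‖ζ‖ ≤ 1)
    (h₁ : ζ ≠ 1) (h₂ : ζ ≠ -1) : cayley t ζ ∈ sector σ := by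
  have h₂' : 1 + ζ ≠ 0 := fun h => h₂ (by linear_combination h)
  refine mem_sector_of_re_nonneg hσ ?_ ?_
  · exact div_ne_zero (mul_ne_zero (ofReal_ne_zero.2 ht.ne') (sub_ne_zero.2 h₁.symm)) h₂'
  · have : normSq ζ ≤ 1 := by rw [normSq_eq_norm_sq]; nlinarith [norm_nonneg ζ]
    rw [re_cayley]
    exact div_nonneg (mul_nonneg ht.le (by linarith)) (normSq_nonneg _)

theorem differentiableAt_cayley (t : ℝ) {ζ : ℂ} (h : ζ ≠ -1) :
    DifferentiableAt ℂ (cayley t) ζ :=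
  ((differentiableAt_const _).mul ((differentiableAt_const _).sub differentiableAt_id)).div
    ((differentiableAt_const _).add differentiableAt_id) fun h' => h (by linear_combination h')

theorem cayley_exp_mul_I (t θ : ℝ) (hθ : Real.cos (θ / 2) ≠ 0) :
    cayley t (exp (θ * I)) = -(t * Real.tan (θ / 2)) * I := by
  have hexp : exp (θ * I) = (Real.cos (θ / 2) + Real.sin (θ / 2) * I) ^ 2 := by
    rw [ofReal_cos, ofReal_sin, ← exp_mul_I, ← Complex.exp_nat_mul]
    congr 1
    push_cast
    ring
  have htan : (Real.tan (θ / 2) : ℂ) = Real.sin (θ / 2) / Real.cos (θ / 2) := by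
    rw [Real.tan_eq_sin_div_cos, ofReal_div]
  have hcs : (Real.cos (θ / 2) : ℂ) ^ 2 + (Real.sin (θ / 2) : ℂ) ^ 2 = 1 := by
    exact_mod_cast Real.cos_sq_add_sin_sq (θ / 2)
  have hc : (Real.cos (θ / 2) : ℂ) ≠ 0 := ofReal_ne_zero.2 hθ
  have hcsI : (Real.cos (θ / 2) : ℂ) + Real.sin (θ / 2) * I ≠ 0 :=
    fun h => exp_ne_zero _ (by rw [hexp, h, zero_pow two_ne_zero])
  rw [cayley, hexp, htan]
  generalize (Real.cos (θ / 2) : ℂ) = c at *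
  generalize (Real.sin (θ / 2) : ℂ) = s at *
  have hden : 1 + (c + s * I) ^ 2 = 2 * c * (c + s * I) := by
    linear_combination (-1 : ℂ) * hcs + s ^ 2 * I_sq
  rw [div_eq_iff (by rw [hden]; exact mul_ne_zero (mul_ne_zero two_ne_zero hc) hcsI), hden]
  field_simp
  linear_combination (-t : ℂ) * hcs + t * s ^ 2 * I_sq

theorem cayley_circleMap_neg_two_arctan {t : ℝ} (ht : t ≠ 0) (v : ℝ) :
    cayley t (circleMap 0 1 (-2 * Real.arctan (v / t))) = I * v := by
  have hhalf : -2 * Real.arctan (v / t) / 2 = -Real.arctan (v / t) := by ring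
  rw [circleMap_zero, ofReal_one, one_mul, cayley_exp_mul_I, hhalf, Real.tan_neg,
    Real.tan_arctan]
  · have ht' : (t : ℂ) ≠ 0 := ofReal_ne_zero.2 ht
    push_cast
    field_simp
  · rw [hhalf, Real.cos_neg]
    exact (Real.cos_arctan_pos _).ne'

section ComposedWithCayley

variable {E : Type*} [NormedAddCommGroup E] [NormedSpace ℂ E] {g : ℂ → E} {σ t : ℝ}

theorem differentiableAt_comp_cayley (hσ : π / 2 < σ) (ht : 0 < t)
    (hg : DifferentiableOn ℂ g (sector σ)) {ζ : ℂ} (hζ : ‖ζ‖ ≤ 1) (h₁ : ζ ≠ 1) (h₂ : ζ ≠ -1) :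
    DifferentiableAt ℂ (fun ζ => g (cayley t ζ)) ζ :=
  (hg.differentiableAt ((isOpen_sector σ).mem_nhds (cayley_mem_sector ht hσ hζ h₁ h₂))).comp ζ
    (differentiableAt_cayley t h₂)

theorem ae_continuousAt_comp_cayley_circleMap (hσ : π / 2 < σ) (ht : 0 < t)
    (hg : DifferentiableOn ℂ g (sector σ)) :
    ∀ᵐ θ, ContinuousAt (fun ζ => g (cayley t ζ)) (circleMap 0 1 θ) := by
  filter_upwards [ae_sin_ne_zero] with θ hθ
  have him : (circleMap 0 1 θ).im ≠ 0 := by rwa [circleMap_zero_im, one_mul]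
  refine (differentiableAt_comp_cayley hσ ht hg ?_ ?_ ?_).continuousAt
  · simp
  · rintro h
    simp [h] at him
  · rintro h
    simp [h] at him

end ComposedWithCayley

/-- Poisson formula for the right half-plane. If `g` is analytic and
bounded on the sector `Σ_{π/2+ε}` for some `ε > 0`, then for all `t > 0`,
`g(t) = (1/π) ∫_{-∞}^∞ (t/(t²+v²)) g(iv) dv`. -/
theorem poisson_formula_half_plane
    {E : Type*} [NormedAddCommGroup E] [NormedSpace ℂ E] [CompleteSpace E]
    (ε : ℝ) (hε : 0 < ε)
    (g : ℂ → E)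
    (hg_an : DifferentiableOn ℂ g (sector (π / 2 + ε)))
    (hg_bd : ∃ M : ℝ, ∀ z ∈ sector (π / 2 + ε), ‖g z‖ ≤ M)
    (t : ℝ) (ht : 0 < t) :
    g t = (1 / π) • ∫ v : ℝ, (t / (t ^ 2 + v ^ 2)) • g (Complex.I * (v : ℂ)) := by
  obtain ⟨M, hM⟩ := hg_bd
  have hσ : π / 2 < π / 2 + ε := by linarith
  have hball : ∀ ζ ∈ ball (0 : ℂ) 1, ‖ζ‖ ≤ 1 ∧ ζ ≠ 1 ∧ ζ ≠ -1 := fun ζ hζ => by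
    rw [mem_ball_zero_iff] at hζ
    exact ⟨hζ.le, by rintro rfl; simp at hζ, by rintro rfl; simp at hζ⟩
  have hmean : circleAverage (fun ζ => g (cayley t ζ)) 0 1 = g t := by
    simpa using DifferentiableOn.circleAverage_eq_of_bounded one_pos
      (fun ζ hζ => (differentiableAt_comp_cayley hσ ht hg_an (hball ζ hζ).1 (hball ζ hζ).2.1
        (hball ζ hζ).2.2).differentiableWithinAt)
      (fun ζ hζ => hM _ (cayley_mem_sector ht hσ (hball ζ hζ).1 (hball ζ hζ).2.1 (hball ζ hζ).2.2))
      (ae_continuousAt_comp_cayley_circleMap hσ ht hg_an)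
  rw [← hmean, circleAverage_eq_integral_neg_pi_pi,
    integral_neg_pi_pi_eq_integral_comp_arctan _ ht]
  simp_rw [cayley_circleMap_neg_two_arctan ht.ne', mul_smul, integral_smul, smul_smul]
  congr 1
  field_simp
end

section
/- Let q ∈ (2,∞), let 0 < λ₁ < λ₂ < … diverge to ∞, and let A be the diagonal operator A e_k = λ_k e_k on ℓ^q. Suppose there is a constant C₁ such that for all G = (g_k) ∈ L²(ℝ₊; ℓ^q), ∫_0^∞ ( Σ_k ( ∫_0^t λ_k e^{-2λ_k(t-s)} |g_k(s)|² ds )^{q/2} )^{2/q} dt ≤ C₁² ∫_0^∞ (Σ_k |g_k(t)|^q)^{2/q} dt. Then the operator B = 2A on ℓ^{q/2} has deterministic maximal L¹-regularity: there is C₂ such that for all f = (f_k) ∈ L¹(ℝ₊; ℓ^{q/2}), ∫_0^∞ (Σ_k |∫_0^t 2λ_k e^{-2λ_k(t-s)} f_k(s) ds|^{q/2})^{2/q} dt ≤ C₂ ∫_0^∞ (Σ_k |f_k(s)|^{q/2})^{2/q} ds. -/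
open MeasureTheory Real Set ENNReal

/-! Put `g_k = √|f_k|`. Then `|g_k|^q = |f_k|^{q/2}` and `g_k² = |f_k|`, so the square-function
estimate for `g` is a bound on `∫₀^∞ ‖(∫₀^t λ_k e^{-2λ_k(t-s)} |f_k(s)| ds)_k‖_{ℓ^{q/2}} dt` by the
`L¹(ℝ₊; ℓ^{q/2})`-norm of `f`. Since `|∫₀^t 2λ_k e^{-2λ_k(t-s)} f_k(s) ds|` is at most twice the
inner integral and the `L¹(ℝ₊; ℓ^{q/2})`-norm is monotone and homogeneous, the maximal
`L¹`-regularity estimate follows with `C₂ = 2 C₁²`. -/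

/-- The norm of `L¹(ℝ₊; ℓ^p)`, on `ℝ≥0∞`-valued sequences. -/
noncomputable def lintegralIoiLpNorm (p : ℝ) (F : ℝ → ℕ → ℝ≥0∞) : ℝ≥0∞ :=
  ∫⁻ t in Ioi 0, (∑' k, F t k ^ p) ^ p⁻¹

lemma lintegralIoiLpNorm_mono {p : ℝ} (hp : 0 ≤ p) {F G : ℝ → ℕ → ℝ≥0∞}
    (hFG : ∀ t k, F t k ≤ G t k) : lintegralIoiLpNorm p F ≤ lintegralIoiLpNorm p G :=
  lintegral_mono fun t => ENNReal.rpow_le_rpow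
    (ENNReal.tsum_le_tsum fun k => ENNReal.rpow_le_rpow (hFG t k) hp) (inv_nonneg.2 hp)

lemma lintegralIoiLpNorm_const_mul {p : ℝ} (hp : 0 < p) {c : ℝ≥0∞} (hc : c ≠ ∞)
    (F : ℝ → ℕ → ℝ≥0∞) :
    lintegralIoiLpNorm p (fun t k => c * F t k) = c * lintegralIoiLpNorm p F := by
  rw [lintegralIoiLpNorm, lintegralIoiLpNorm, ← lintegral_const_mul' c _ hc]
  refine lintegral_congr fun t => ?_
  simp only [ENNReal.mul_rpow_of_nonneg _ _ hp.le, ENNReal.tsum_mul_left]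
  rw [ENNReal.mul_rpow_of_nonneg _ _ (inv_nonneg.2 hp.le), ← ENNReal.rpow_mul,
    mul_inv_cancel₀ hp.ne', ENNReal.rpow_one]

lemma ofReal_abs_integral_mul_le_lintegral {α : Type*} [MeasurableSpace α] {μ : Measure α}
    {K : α → ℝ} (hK : ∀ x, 0 ≤ K x) (f : α → ℝ) :
    ENNReal.ofReal |∫ x, K x * f x ∂μ| ≤ ∫⁻ x, ENNReal.ofReal (K x * |f x|) ∂μ := by
  rw [← Real.enorm_eq_ofReal_abs]
  refine (enorm_integral_le_lintegral_enorm _).trans_eq (lintegral_congr fun x => ?_)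
  rw [Real.enorm_eq_ofReal_abs, abs_mul, abs_of_nonneg (hK x)]

lemma ofReal_sqrt_abs_rpow (x q : ℝ) :
    ENNReal.ofReal |(√|x|)| ^ q = ENNReal.ofReal |x| ^ (q / 2) := by
  rw [abs_of_nonneg (Real.sqrt_nonneg _), Real.sqrt_eq_rpow,
    ← ENNReal.ofReal_rpow_of_nonneg (abs_nonneg _) (by norm_num), ← ENNReal.rpow_mul,
    one_div_mul_eq_div]

theorem stochastic_L2_estimate_implies_deterministic_maximal_L1_regularity_general
    (q : ℝ) (hq : 2 < q)
    (lam : ℕ → ℝ) (hpos : 0 < lam 0) (hmono : StrictMono lam)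
    (C₁ : ℝ)
    -- hypothesis: the square-function estimate on `L²(ℝ₊; ℓ^q)`
    (hyp : ∀ g : ℕ → ℝ → ℝ, (∀ k, Measurable (g k)) →
      ∫⁻ t in Set.Ioi (0:ℝ),
          (∑' k : ℕ,
            (∫⁻ s in Set.Ioo 0 t,
                ENNReal.ofReal (lam k * Real.exp (-2 * lam k * (t - s)) * (g k s) ^ 2))
              ^ (q / 2)) ^ (2 / q)
        ≤ ENNReal.ofReal (C₁ ^ 2) *
          ∫⁻ t in Set.Ioi (0:ℝ),
            (∑' k : ℕ, ENNReal.ofReal |g k t| ^ q) ^ (2 / q)) :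
    -- conclusion: deterministic maximal `L¹`-regularity for `B = 2A` on `ℓ^{q/2}`
    ∃ C₂ : ℝ, 0 ≤ C₂ ∧ ∀ f : ℕ → ℝ → ℝ, (∀ k, Measurable (f k)) →
      ∫⁻ t in Set.Ioi (0:ℝ),
          (∑' k : ℕ,
            (ENNReal.ofReal
              |∫ s in Set.Ioo 0 t, 2 * lam k * Real.exp (-2 * lam k * (t - s)) * f k s|)
              ^ (q / 2)) ^ (2 / q)
        ≤ ENNReal.ofReal C₂ *
          ∫⁻ s in Set.Ioi (0:ℝ),
            (∑' k : ℕ, ENNReal.ofReal |f k s| ^ (q / 2)) ^ (2 / q) := by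
  have hq2 : 0 < q / 2 := by positivity
  have hlam (k : ℕ) : 0 ≤ lam k := hpos.le.trans (hmono.monotone k.zero_le)
  refine ⟨2 * C₁ ^ 2, by positivity, fun f hf => ?_⟩
  have hyp_sqrt := hyp (fun k s => √|f k s|) fun k => (hf k).abs.sqrt
  simp only [Real.sq_sqrt (abs_nonneg _), ofReal_sqrt_abs_rpow, ← inv_div q 2] at hyp_sqrt
  have hpointwise (t : ℝ) (k : ℕ) :
      ENNReal.ofReal |∫ s in Ioo 0 t, 2 * lam k * Real.exp (-2 * lam k * (t - s)) * f k s|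
        ≤ 2 * ∫⁻ s in Ioo 0 t, ENNReal.ofReal (lam k * Real.exp (-2 * lam k * (t - s)) * |f k s|) := by
    refine (ofReal_abs_integral_mul_le_lintegral fun s => by have := hlam k; positivity _).trans_eq ?_
    rw [← lintegral_const_mul' _ _ ofNat_ne_top]
    simp only [mul_assoc, ENNReal.ofReal_mul zero_le_two, ofReal_ofNat]
  rw [← inv_div q 2]
  calc lintegralIoiLpNorm (q / 2) (fun t k => ENNReal.ofReal
          |∫ s in Ioo 0 t, 2 * lam k * Real.exp (-2 * lam k * (t - s)) * f k s|)
      ≤ lintegralIoiLpNorm (q / 2) (fun t k => 2 * ∫⁻ s in Ioo 0 t,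
          ENNReal.ofReal (lam k * Real.exp (-2 * lam k * (t - s)) * |f k s|)) :=
        lintegralIoiLpNorm_mono hq2.le hpointwise
    _ = 2 * lintegralIoiLpNorm (q / 2) (fun t k => ∫⁻ s in Ioo 0 t,
          ENNReal.ofReal (lam k * Real.exp (-2 * lam k * (t - s)) * |f k s|)) :=
        lintegralIoiLpNorm_const_mul hq2 ofNat_ne_top _
    _ ≤ 2 * (ENNReal.ofReal (C₁ ^ 2) *
          lintegralIoiLpNorm (q / 2) (fun s k => ENNReal.ofReal |f k s|)) := by
        gcongr
        exact hyp_sqrt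
    _ = ENNReal.ofReal (2 * C₁ ^ 2) *
          lintegralIoiLpNorm (q / 2) (fun s k => ENNReal.ofReal |f k s|) := by
        rw [ENNReal.ofReal_mul zero_le_two, ofReal_ofNat, mul_assoc]

/-- if the stochastic maximal `L²`-regularity square-function estimate
holds for the diagonal operator `A e_k = λ_k e_k` on `ℓ^q` (`q > 2`), then `B = 2A`
has deterministic maximal `L¹`-regularity on `ℓ^{q/2}`. -/
theorem stochastic_L2_estimate_implies_deterministic_maximal_L1_regularity
    (q : ℝ) (hq : 2 < q)
    (lam : ℕ → ℝ) (hpos : 0 < lam 0) (hmono : StrictMono lam)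
    (hdiv : Filter.Tendsto lam Filter.atTop Filter.atTop)
    (C₁ : ℝ)
    -- hypothesis: the square-function estimate on `L²(ℝ₊; ℓ^q)`
    (hyp : ∀ g : ℕ → ℝ → ℝ, (∀ k, Measurable (g k)) →
      ∫⁻ t in Set.Ioi (0:ℝ),
          (∑' k : ℕ,
            (∫⁻ s in Set.Ioo 0 t,
                ENNReal.ofReal (lam k * Real.exp (-2 * lam k * (t - s)) * (g k s) ^ 2))
              ^ (q / 2)) ^ (2 / q)
        ≤ ENNReal.ofReal (C₁ ^ 2) *
          ∫⁻ t in Set.Ioi (0:ℝ),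
            (∑' k : ℕ, ENNReal.ofReal |g k t| ^ q) ^ (2 / q)) :
    -- conclusion: deterministic maximal `L¹`-regularity for `B = 2A` on `ℓ^{q/2}`
    ∃ C₂ : ℝ, 0 ≤ C₂ ∧ ∀ f : ℕ → ℝ → ℝ, (∀ k, Measurable (f k)) →
      ∫⁻ t in Set.Ioi (0:ℝ),
          (∑' k : ℕ,
            (ENNReal.ofReal
              |∫ s in Set.Ioo 0 t, 2 * lam k * Real.exp (-2 * lam k * (t - s)) * f k s|)
              ^ (q / 2)) ^ (2 / q)
        ≤ ENNReal.ofReal C₂ *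
          ∫⁻ s in Set.Ioi (0:ℝ),
            (∑' k : ℕ, ENNReal.ofReal |f k s| ^ (q / 2)) ^ (2 / q) :=
  stochastic_L2_estimate_implies_deterministic_maximal_L1_regularity_general q hq lam hpos hmono C₁
    hyp
end
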